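/- In an ordinal grammar where each L(X) has at least two words, if X ⇒* q·Y·r·Z·s for nonterminals Y, Z with Y ≈ X and Z ≈ X (mutual reachability), then a contradiction follows; hence any sentential form derivable from X contains at most one nonterminal equivalent to X. -/

import Mathlib

/-- The branching (strict) order on words: `u <ₛ v` iff they have a common
prefix followed by letters `a < b`. -/
def BranchLT {A : Type*} [LinearOrder A] (u v : List A) : Prop :=
  ∃ (w : List A) (a b : A) (u' v' : List A),
    a < b ∧ u = w ++ a :: u' ∧ v = w ++ b :: v'

/-- The proper-prefix order on words. -/
def PrefLT {A : Type*} [LinearOrder A] (u v : List A) : Prop :=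
  u <+: v ∧ u ≠ v

/-- The lexicographic order: proper prefix or branching. -/
def WordLex {A : Type*} [LinearOrder A] (u v : List A) : Prop :=
  PrefLT u v ∨ BranchLT u v

/-- A prefix language: no member is a proper prefix of another member. -/
def IsPrefixLang {A : Type*} [LinearOrder A] (L : Set (List A)) : Prop :=
  ∀ u ∈ L, ∀ v : List A, u ++ v ∈ L → v = []

/-- The lexicographic order restricted to a set of words. -/
def subLex {A : Type*} [LinearOrder A] (L : Set (List A)) : ↥L → ↥L → Prop :=
  fun a b => WordLex a.1 b.1

/-- Elementwise concatenation of two languages. -/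
def LangConcat {A : Type*} (K L : Set (List A)) : Set (List A) :=
  { w | ∃ u ∈ K, ∃ v ∈ L, w = u ++ v }

/-- `n`-fold concatenation power of a language. -/
def LangPow {A : Type*} (L : Set (List A)) : ℕ → Set (List A)
  | 0 => {[]}
  | n + 1 => LangConcat L (LangPow L n)

/-- A context-free grammar over the terminal alphabet `{0,1}` (= `Bool`,
with `false = 0 < 1 = true`), with nonterminals `N`. -/
structure CFG (N : Type) where
  start : N
  prods : N → Set (List (N ⊕ Bool))

/-- One derivation step: replace an occurrence of a nonterminal by the
right-hand side of one of its productions. -/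
def CFG.Step {N : Type} (G : CFG N) (p q : List (N ⊕ Bool)) : Prop :=
  ∃ (l r : List (N ⊕ Bool)) (X : N) (w : List (N ⊕ Bool)),
    p = l ++ Sum.inl X :: r ∧ w ∈ G.prods X ∧ q = l ++ w ++ r

/-- Derivation: the reflexive-transitive closure of `Step`. -/
def CFG.Derives {N : Type} (G : CFG N) : List (N ⊕ Bool) → List (N ⊕ Bool) → Prop :=
  Relation.ReflTransGen G.Step

/-- View a terminal word as a sentential form. -/
def liftWord {N : Type} (u : List Bool) : List (N ⊕ Bool) := u.map Sum.inr

/-- The language of terminal words derivable from a sentential form `q`. -/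
def CFG.lang {N : Type} (G : CFG N) (q : List (N ⊕ Bool)) : Set (List Bool) :=
  { u | G.Derives q (liftWord u) }

/-- The language of a nonterminal. -/
def CFG.langN {N : Type} (G : CFG N) (X : N) : Set (List Bool) :=
  G.lang [Sum.inl X]

/-- A nonterminal is accessible if it occurs in some sentential form
derivable from the start symbol. -/
def CFG.Accessible {N : Type} (G : CFG N) (X : N) : Prop :=
  ∃ q r : List (N ⊕ Bool), G.Derives [Sum.inl G.start] (q ++ Sum.inl X :: r)

/-- `Y ⪯ X`: the nonterminal `Y` occurs in some sentential form derivable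
from `X`. -/
def CFG.Reaches {N : Type} (G : CFG N) (X Y : N) : Prop :=
  ∃ p q : List (N ⊕ Bool), G.Derives [Sum.inl X] (p ++ Sum.inl Y :: q)

/-- `X ≈ Y`: mutual reachability of nonterminals. -/
def CFG.Equiv {N : Type} (G : CFG N) (X Y : N) : Prop :=
  G.Reaches X Y ∧ G.Reaches Y X

/-!
The two occurrences let `X` derive `a X b X c` with terminal `a, b, c`. Since `L(X)` is prefix-free
with two words, it has words `u <ₛ v` that branch. The words `t₀ = a v b u c`,
`tₙ₊₁ = a u b tₙ c` of `L(X)` then descend strictly in the branching order, and a terminal context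
of `X` inside the start symbol turns them into an infinite descending chain in the well-ordered
`L(S)`.
-/

namespace CFG

variable {N : Type} {G : CFG N}

theorem Step.append (l r : List (N ⊕ Bool)) {p q : List (N ⊕ Bool)} (h : G.Step p q) :
    G.Step (l ++ p ++ r) (l ++ q ++ r) := by
  obtain ⟨l', r', X, w, rfl, hw, rfl⟩ := h
  exact ⟨l ++ l', r' ++ r, X, w, by simp, hw, by simp⟩

theorem Derives.append {p p' q q' : List (N ⊕ Bool)} (hp : G.Derives p p')
    (hq : G.Derives q q') : G.Derives (p ++ q) (p' ++ q') :=
  (hp.lift (· ++ q) fun _ _ h => by simpa using h.append [] q).trans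
    (hq.lift (p' ++ ·) fun _ _ h => by simpa using h.append p' [])

theorem append_mem_lang {p q : List (N ⊕ Bool)} {u v : List Bool} (hu : u ∈ G.lang p)
    (hv : v ∈ G.lang q) : u ++ v ∈ G.lang (p ++ q) := by
  show G.Derives _ (liftWord (u ++ v))
  simpa only [liftWord, List.map_append] using hu.append hv

theorem Derives.lang_subset {p q : List (N ⊕ Bool)} (h : G.Derives p q) :
    G.lang q ⊆ G.lang p :=
  fun _ hu => h.trans hu

theorem lang_nonempty (hco : ∀ X : N, (G.langN X).Nonempty) (p : List (N ⊕ Bool)) :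
    (G.lang p).Nonempty := by
  induction p with
  | nil => exact ⟨[], Relation.ReflTransGen.refl⟩
  | cons x p ih =>
    obtain ⟨w, hw⟩ : (G.lang [x]).Nonempty := by
      cases x with
      | inl X => exact hco X
      | inr b => exact ⟨[b], Relation.ReflTransGen.refl⟩
    obtain ⟨u, hu⟩ := ih
    exact ⟨w ++ u, append_mem_lang hw hu⟩

theorem Reaches.exists_context (hco : ∀ X : N, (G.langN X).Nonempty) {X Y : N}
    (h : G.Reaches X Y) : ∃ a c : List Bool, ∀ t ∈ G.langN Y, a ++ t ++ c ∈ G.langN X := by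
  obtain ⟨p, q, hd⟩ := h
  obtain ⟨a, ha⟩ := lang_nonempty hco p
  obtain ⟨c, hc⟩ := lang_nonempty hco q
  refine ⟨a, c, fun t ht => hd.lang_subset ?_⟩
  simpa using append_mem_lang (append_mem_lang ha ht) hc

theorem exists_two_hole_context (hco : ∀ X : N, (G.langN X).Nonempty) {X Y Z : N}
    {q r s : List (N ⊕ Bool)}
    (hder : G.Derives [Sum.inl X] (q ++ Sum.inl Y :: r ++ Sum.inl Z :: s))
    (hYX : G.Reaches Y X) (hZX : G.Reaches Z X) :
    ∃ a b c : List Bool, ∀ t₁ ∈ G.langN X, ∀ t₂ ∈ G.langN X,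
      a ++ t₁ ++ b ++ t₂ ++ c ∈ G.langN X := by
  obtain ⟨aY, cY, hY⟩ := hYX.exists_context hco
  obtain ⟨aZ, cZ, hZ⟩ := hZX.exists_context hco
  obtain ⟨wq, hq⟩ := lang_nonempty hco q
  obtain ⟨wr, hr⟩ := lang_nonempty hco r
  obtain ⟨ws, hs⟩ := lang_nonempty hco s
  refine ⟨wq ++ aY, cY ++ wr ++ aZ, cZ ++ ws, fun t₁ h₁ t₂ h₂ => hder.lang_subset ?_⟩
  simpa using append_mem_lang (append_mem_lang (append_mem_lang (append_mem_lang hq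
    (hY t₁ h₁)) hr) (hZ t₂ h₂)) hs

end CFG

section Words

variable {A : Type*} [LinearOrder A]

theorem BranchLT.append_append {u v : List A} (h : BranchLT u v) (p s s' : List A) :
    BranchLT (p ++ u ++ s) (p ++ v ++ s') := by
  obtain ⟨w, a, b, u', v', hab, rfl, rfl⟩ := h
  exact ⟨p ++ w, a, b, u' ++ s, v' ++ s', hab, by simp, by simp⟩

theorem prefix_or_prefix_or_branchLT (u v : List A) :
    u <+: v ∨ v <+: u ∨ BranchLT u v ∨ BranchLT v u := by
  induction u generalizing v with
  | nil => exact Or.inl List.nil_prefix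
  | cons x u ih =>
    cases v with
    | nil => exact Or.inr (Or.inl List.nil_prefix)
    | cons y v =>
      rcases lt_trichotomy x y with hxy | rfl | hxy
      · exact Or.inr (Or.inr (Or.inl ⟨[], x, y, u, v, hxy, rfl, rfl⟩))
      · rcases ih v with h | h | h | h
        · exact Or.inl (List.cons_prefix_cons.mpr ⟨rfl, h⟩)
        · exact Or.inr (Or.inl (List.cons_prefix_cons.mpr ⟨rfl, h⟩))
        · exact Or.inr (Or.inr (Or.inl (by simpa using h.append_append [x] [] [])))
        · exact Or.inr (Or.inr (Or.inr (by simpa using h.append_append [x] [] [])))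
      · exact Or.inr (Or.inr (Or.inr ⟨[], y, x, v, u, hxy, rfl, rfl⟩))

theorem IsPrefixLang.branchLT_or_branchLT {L : Set (List A)} (hL : IsPrefixLang L)
    {u v : List A} (hu : u ∈ L) (hv : v ∈ L) (hne : u ≠ v) :
    BranchLT u v ∨ BranchLT v u := by
  rcases prefix_or_prefix_or_branchLT u v with ⟨t, rfl⟩ | ⟨t, rfl⟩ | h | h
  · exact absurd (by rw [hL u hu t hv, List.append_nil]) hne
  · exact absurd (by rw [hL v hv t hu, List.append_nil]) hne.symm
  · exact Or.inl h
  · exact Or.inr h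

theorem exists_branchLT_decreasing_seq {K : Set (List A)} {a b c u v : List A}
    (hpump : ∀ t₁ ∈ K, ∀ t₂ ∈ K, a ++ t₁ ++ b ++ t₂ ++ c ∈ K) (hu : u ∈ K) (hv : v ∈ K)
    (huv : BranchLT u v) :
    ∃ f : ℕ → List A, (∀ n, f n ∈ K) ∧ ∀ n, BranchLT (f (n + 1)) (f n) := by
  set φ : List A → List A := fun t => a ++ u ++ b ++ t ++ c
  have hφ : Set.MapsTo φ K K := fun t ht => hpump u hu t ht
  set t₀ := a ++ v ++ b ++ u ++ c
  refine ⟨fun n => φ^[n] t₀, fun n => hφ.iterate n (hpump v hv u hu), fun n => ?_⟩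
  dsimp only
  rw [Function.iterate_succ_apply]
  induction n with
  | zero => simpa [φ, t₀] using huv.append_append a (b ++ t₀ ++ c) (b ++ u ++ c)
  | succ n ih =>
    simp only [Function.iterate_succ_apply']
    exact ih.append_append (a ++ u ++ b) c c

end Words

/-- In an ordinal grammar where each L(X) has at least two words, no
sentential form derivable from X can contain two occurrences of
nonterminals equivalent to X: from X ⇒* q·Y·r·Z·s with Y ≈ X and Z ≈ X a
contradiction follows. -/
theorem stmt19 {N : Type} (G : CFG N)
    (hacc : ∀ X : N, G.Accessible X)
    (hco : ∀ X : N, (G.langN X).Nonempty)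
    (hpre : ∀ X : N, IsPrefixLang (G.langN X))
    (htwo : ∀ X : N, ∃ u v : List Bool, u ∈ G.langN X ∧ v ∈ G.langN X ∧ u ≠ v)
    (hwo : IsWellOrder ↥(G.langN G.start) (subLex (G.langN G.start)))
    (X Y Z : N) (q r s : List (N ⊕ Bool))
    (hder : G.Derives [Sum.inl X] (q ++ Sum.inl Y :: r ++ Sum.inl Z :: s))
    (hY : G.Equiv X Y) (hZ : G.Equiv X Z) :
    False := by
  obtain ⟨a, b, c, hpump⟩ := G.exists_two_hole_context hco hder hY.2 hZ.2
  obtain ⟨a₀, c₀, hstart⟩ := CFG.Reaches.exists_context hco (hacc X)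
  obtain ⟨u, v, hu, hv, hne⟩ := htwo X
  wlog huv : BranchLT u v generalizing u v
  · exact this v u hv hu hne.symm (((hpre X).branchLT_or_branchLT hu hv hne).resolve_left huv)
  obtain ⟨f, hfK, hf⟩ := exists_branchLT_decreasing_seq hpump hu hv huv
  obtain ⟨n, hn⟩ := WellFounded.not_rel_apply_succ (r := subLex (G.langN G.start))
    fun n => ⟨a₀ ++ f n ++ c₀, hstart _ (hfK n)⟩
  exact hn (Or.inr ((hf n).append_append a₀ c₀ c₀))
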